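/- arXiv:1909.02661 — 2 statements merged into one kernel-verified Lean document; each statement's English description precedes it below -/
import Mathlib

section
/- Let F be a field, n ≥ 2, and let B^±_n(F) be the simplicial complex of partial ±-bases of F^n and BD^±_n(F) its subcomplex of determinant-±1 partial ±-bases. Then BD^±_n(F) is a retract of B^±_n(F): there is a continuous retraction ρ: B^±_n(F) → BD^±_n(F) restricting to the identity on BD^±_n(F). -/
/-- A ±-vector in `F^n`: a set `{v, -v}` with `v ≠ 0`. -/
def PMVec (F : Type*) [Field F] (n : ℕ) : Type _ :=
  {s : Set (Fin n → F) // ∃ v : Fin n → F, v ≠ 0 ∧ s = {v, -v}}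

/-- A finite set of ±-vectors is a partial ±-basis if one (equivalently, any) choice of
representatives is linearly independent (over a field this means it extends to a basis).
These are the simplices of `B^±_n(F)`. -/
def IsPMBasis (F : Type*) [Field F] (n : ℕ) (σ : Finset (PMVec F n)) : Prop :=
  ∃ f : {x // x ∈ σ} → (Fin n → F),
    (∀ x : {x // x ∈ σ}, f x ∈ x.1.1) ∧ LinearIndependent F f

/-- A partial ±-basis is a determinant-±1 partial ±-basis if, in the top-dimensional
case `|σ| = n`, the matrix of a choice of representatives has determinant `1` or `-1`.
These are the simplices of `BD^±_n(F)`. -/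
def IsPMBasisDet1 (F : Type*) [Field F] (n : ℕ) (σ : Finset (PMVec F n)) : Prop :=
  ∃ f : {x // x ∈ σ} → (Fin n → F),
    (∀ x : {x // x ∈ σ}, f x ∈ x.1.1) ∧ LinearIndependent F f ∧
      ∀ e : Fin n ≃ {x // x ∈ σ},
        Matrix.det (Matrix.of fun i j => f (e j) i) = 1 ∨
        Matrix.det (Matrix.of fun i j => f (e j) i) = -1

/-- A point of the geometric realization of the simplicial complex with simplices `S`:
a nonnegative weight function supported on a simplex, with weights summing to `1`. -/
def RealPt {F : Type*} [Field F] {n : ℕ} (S : Finset (PMVec F n) → Prop)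
    (g : PMVec F n → ℝ) : Prop :=
  (∀ x, 0 ≤ g x) ∧
    ∃ σ : Finset (PMVec F n), S σ ∧ (∀ x ∉ σ, g x = 0) ∧ ∑ x ∈ σ, g x = 1

attribute [local instance] Classical.propDecidable

namespace Stmt12Aux

variable {F : Type*} [Field F] {n : ℕ}

/-- A bad simplex: a partial ±-basis that is not a determinant-±1 partial ±-basis. -/
def Bad (F : Type*) [Field F] (n : ℕ) (σ : Finset (PMVec F n)) : Prop :=
  IsPMBasis F n σ ∧ ¬ IsPMBasisDet1 F n σ

lemma card_le_of_isPMBasis {σ : Finset (PMVec F n)} (h : IsPMBasis F n σ) : σ.card ≤ n := by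
  obtain ⟨f, -, hf⟩ := h
  have := hf.fintype_card_le_finrank
  simpa [Module.finrank_pi] using this

lemma isPMBasis_subset {σ τ : Finset (PMVec F n)} (hτ : τ ⊆ σ) (h : IsPMBasis F n σ) :
    IsPMBasis F n τ := by
  obtain ⟨f, hf1, hf2⟩ := h
  refine ⟨fun x => f ⟨x.1, hτ x.2⟩, fun x => hf1 ⟨x.1, hτ x.2⟩, ?_⟩
  refine hf2.comp (fun x : {x // x ∈ τ} => (⟨x.1, hτ x.2⟩ : {x // x ∈ σ})) ?_
  intro a b hab
  have h2 : a.1 = b.1 := by simpa using hab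
  exact Subtype.ext h2

lemma det1_of_card_lt {σ : Finset (PMVec F n)} (h : IsPMBasis F n σ) (hc : σ.card < n) :
    IsPMBasisDet1 F n σ := by
  obtain ⟨f, hf1, hf2⟩ := h
  refine ⟨f, hf1, hf2, fun e => ?_⟩
  exfalso
  have := Fintype.card_congr e
  simp [Fintype.card_coe] at this
  omega

lemma bad_card {σ : Finset (PMVec F n)} (h : Bad F n σ) : σ.card = n := by
  rcases lt_or_eq_of_le (card_le_of_isPMBasis h.1) with hlt | he
  · exact absurd (det1_of_card_lt h.1 hlt) h.2
  · exact he

lemma exists_w (hn : 2 ≤ n) {σ : Finset (PMVec F n)} (hb : IsPMBasis F n σ)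
    (hcard : σ.card = n) :
    ∃ w : PMVec F n, w ∉ σ ∧ ∀ y ∈ σ, IsPMBasisDet1 F n (insert w (σ.erase y)) := by
  obtain ⟨f, hf1, hf2⟩ := hb
  have hcard' : Fintype.card {x // x ∈ σ} = n := by simp [hcard]
  set e : Fin n ≃ {x // x ∈ σ} := (Fintype.equivFinOfCardEq hcard').symm with he_def
  set v : Fin n → (Fin n → F) := fun k => f (e k) with hv_def
  have hv : LinearIndependent F v := hf2.comp e e.injective
  set N : Matrix (Fin n) (Fin n) F := Matrix.of v with hN_def
  have hNrows : LinearIndependent F (fun i => N i) := hv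
  have hdu : IsUnit N := Matrix.linearIndependent_rows_iff_isUnit.mp hNrows
  have hd : N.det ≠ 0 := by
    have h1 := (Matrix.isUnit_iff_isUnit_det N).mp hdu
    exact h1.ne_zero
  set d : F := N.det with hd_def
  set w : Fin n → F := d⁻¹ • ∑ k, v k with hw_def
  have hw_sum : w = ∑ k, (fun _ : Fin n => d⁻¹) k • N k := by
    rw [hw_def, Finset.smul_sum]
    rfl
  have hdet_update : ∀ i₀ : Fin n, (N.updateRow i₀ w).det = 1 := by
    intro i₀
    rw [hw_sum, Matrix.det_updateRow_sum]
    simp [smul_eq_mul, inv_mul_cancel₀ hd]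
    exact inv_mul_cancel₀ hd
  have hw0 : w ≠ 0 := by
    intro h0
    have h1 := hdet_update ⟨0, by omega⟩
    have h2 : (N.updateRow ⟨0, by omega⟩ w).det = 0 := by
      apply Matrix.det_eq_zero_of_row_eq_zero ⟨0, by omega⟩
      intro j
      rw [Matrix.updateRow_self, h0]
      rfl
    rw [h1] at h2
    exact one_ne_zero h2
  set W : PMVec F n := ⟨{w, -w}, w, hw0, rfl⟩ with hW_def
  have hWs : W ∉ σ := by
    intro hmem
    have hfm : f ⟨W, hmem⟩ ∈ ({w, -w} : Set (Fin n → F)) := hf1 ⟨W, hmem⟩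
    set k₀ : Fin n := e.symm ⟨W, hmem⟩ with hk0
    have hvk0 : v k₀ = f ⟨W, hmem⟩ := by
      rw [hv_def]
      simp [hk0]
    obtain ⟨ε, hε⟩ : ∃ ε : F, w = ε • v k₀ := by
      rcases hfm with h | h
      · exact ⟨1, by rw [hvk0, ← h, one_smul]⟩
      · refine ⟨-1, ?_⟩
        simp only [Set.mem_singleton_iff] at h
        rw [hvk0, h]
        simp
    have hnt : Nontrivial (Fin n) := Fin.nontrivial_iff_two_le.mpr hn
    obtain ⟨k₁, hk₁⟩ := exists_ne k₀
    have hrel : ∑ k, ((d⁻¹ - if k = k₀ then ε else 0) • v k) = 0 := by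
      simp_rw [sub_smul, ite_smul, zero_smul]
      rw [Finset.sum_sub_distrib, Finset.sum_ite_eq' Finset.univ k₀ (fun k => ε • v k)]
      simp only [Finset.mem_univ, if_true]
      rw [← Finset.smul_sum, ← hw_def, hε, sub_self]
    have hzero := Fintype.linearIndependent_iff.mp hv _ hrel k₁
    rw [if_neg hk₁, sub_zero] at hzero
    exact hd (inv_eq_zero.mp hzero)
  refine ⟨W, hWs, ?_⟩
  intro y hy
  set i₀ : Fin n := e.symm ⟨y, hy⟩ with hi0
  set N' := N.updateRow i₀ w with hN'
  have hdet1 : N'.det = 1 := hdet_update i₀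
  have hN'unit : IsUnit N' := (Matrix.isUnit_iff_isUnit_det N').mpr (by rw [hdet1]; exact isUnit_one)
  have hv' : LinearIndependent F (fun k => N' k) :=
    Matrix.linearIndependent_rows_iff_isUnit.mpr hN'unit
  have hWer : W ∉ σ.erase y := fun h => hWs (Finset.mem_of_mem_erase h)
  have hcardσ' : (insert W (σ.erase y)).card = n := by
    rw [Finset.card_insert_of_notMem hWer, Finset.card_erase_of_mem hy, hcard]
    omega
  have hmem_of : ∀ x : {x // x ∈ insert W (σ.erase y)}, x.1 ≠ W → x.1 ∈ σ := by
    intro x hx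
    exact Finset.mem_of_mem_erase ((Finset.mem_insert.mp x.2).resolve_left hx)
  have hne_i0 : ∀ (x : {x // x ∈ insert W (σ.erase y)}) (hx : x.1 ≠ W),
      e.symm ⟨x.1, hmem_of x hx⟩ ≠ i₀ := by
    intro x hx h
    have h1 : (⟨x.1, hmem_of x hx⟩ : {z // z ∈ σ}) = ⟨y, hy⟩ := by
      have h2 := congrArg e h
      simpa [hi0] using h2
    have hxy : x.1 = y := congrArg Subtype.val h1
    have h3 : x.1 ∈ σ.erase y := (Finset.mem_insert.mp x.2).resolve_left hx
    exact (Finset.ne_of_mem_erase h3) hxy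
  set gg : {x // x ∈ insert W (σ.erase y)} → Fin n :=
    fun x => if hx : x.1 = W then i₀ else e.symm ⟨x.1, hmem_of x hx⟩ with hgg
  have gginj : Function.Injective gg := by
    intro a b hab
    by_cases ha : a.1 = W <;> by_cases hb' : b.1 = W
    · exact Subtype.ext (ha.trans hb'.symm)
    · exfalso; rw [hgg] at hab; simp only [dif_pos ha, dif_neg hb'] at hab
      exact hne_i0 b hb' hab.symm
    · exfalso; rw [hgg] at hab; simp only [dif_pos hb', dif_neg ha] at hab
      exact hne_i0 a ha hab
    · rw [hgg] at hab; simp only [dif_neg ha, dif_neg hb'] at hab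
      have h1 := e.symm.injective hab
      have h2 : a.1 = b.1 := by simpa using h1
      exact Subtype.ext h2
  have ggbij : Function.Bijective gg :=
    (Fintype.bijective_iff_injective_and_card gg).mpr
      ⟨gginj, by simp [Fintype.card_coe, hcardσ']⟩
  refine ⟨fun x => N' (gg x), ?_, hv'.comp gg gginj, ?_⟩
  · intro x
    by_cases hx : x.1 = W
    · rw [hgg]
      simp only [dif_pos hx]
      rw [hN', Matrix.updateRow_self, hx]
      exact Set.mem_insert _ _
    · rw [hgg]
      simp only [dif_neg hx]
      rw [hN', Matrix.updateRow_ne (hne_i0 x hx)]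
      show v _ ∈ _
      rw [hv_def]
      simp only [Equiv.apply_symm_apply]
      exact hf1 ⟨x.1, hmem_of x hx⟩
  · intro e''
    set pe : Equiv.Perm (Fin n) := e''.trans (Equiv.ofBijective gg ggbij) with hpe
    have hM : (Matrix.of fun i j => N' (gg (e'' j)) i) = (N'.transpose).submatrix id ⇑pe := rfl
    rcases Int.units_eq_one_or pe.sign with h | h
    · left
      rw [hM, Matrix.det_permute', Matrix.det_transpose, hdet1, h]
      simp
    · right
      rw [hM, Matrix.det_permute', Matrix.det_transpose, hdet1, h]
      simp

noncomputable def junkVec (F : Type*) [Field F] (n : ℕ) (hn : 2 ≤ n) : PMVec F n :=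
  ⟨{(fun _ => 1 : Fin n → F), -(fun _ => 1)}, fun _ => 1, by
    intro h
    have := congrFun h ⟨0, by omega⟩
    exact one_ne_zero this, rfl⟩

noncomputable def wfun (hn : 2 ≤ n) (σ : Finset (PMVec F n)) : PMVec F n :=
  if h : Bad F n σ then (exists_w hn h.1 (bad_card h)).choose else junkVec F n hn

lemma wfun_not_mem (hn : 2 ≤ n) {σ : Finset (PMVec F n)} (h : Bad F n σ) :
    wfun hn σ ∉ σ := by
  rw [wfun, dif_pos h]
  exact (exists_w hn h.1 (bad_card h)).choose_spec.1

lemma wfun_det1 (hn : 2 ≤ n) {σ : Finset (PMVec F n)} (h : Bad F n σ) {y : PMVec F n}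
    (hy : y ∈ σ) : IsPMBasisDet1 F n (insert (wfun hn σ) (σ.erase y)) := by
  rw [wfun, dif_pos h]
  exact (exists_w hn h.1 (bad_card h)).choose_spec.2 y hy

noncomputable def mval (σ : Finset (PMVec F n)) (g : PMVec F n → ℝ) : ℝ :=
  if h : σ.Nonempty then σ.inf' h g else 0

noncomputable def rho (hn : 2 ≤ n) (g : PMVec F n → ℝ) : PMVec F n → ℝ :=
  if h : ∃ σ : Finset (PMVec F n), Bad F n σ ∧ ∀ x ∈ σ, 0 < g x then
    fun x => g x - (if x ∈ h.choose then mval h.choose g else 0)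
      + (if x = wfun hn h.choose then (h.choose.card : ℝ) * mval h.choose g else 0)
  else g

lemma star_eq {g : PMVec F n → ℝ} (hnn : ∀ x, 0 ≤ g x) {σ τ : Finset (PMVec F n)}
    (hσ : Bad F n σ) (hpos : ∀ x ∈ σ, 0 < g x) (hτcard : τ.card ≤ n)
    (hz : ∀ x ∉ τ, g x = 0) : σ = τ := by
  have hsub : σ ⊆ τ := by
    intro x hx
    by_contra h
    exact absurd (hz x h) (hpos x hx).ne'
  exact Finset.eq_of_subset_of_card_le hsub (by rw [bad_card hσ]; exact hτcard)

lemma rho_eq_of (hn : 2 ≤ n) {g : PMVec F n → ℝ} (hg : RealPt (IsPMBasis F n) g)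
    {σ : Finset (PMVec F n)} (hσ : Bad F n σ) (hpos : ∀ x ∈ σ, 0 < g x) :
    rho hn g = fun x => g x - (if x ∈ σ then mval σ g else 0)
      + (if x = wfun hn σ then (σ.card : ℝ) * mval σ g else 0) := by
  have hex : ∃ σ' : Finset (PMVec F n), Bad F n σ' ∧ ∀ x ∈ σ', 0 < g x := ⟨σ, hσ, hpos⟩
  obtain ⟨hnn, τ, hτ, hz, hsum⟩ := hg
  have h1 : hex.choose = τ :=
    star_eq hnn hex.choose_spec.1 hex.choose_spec.2 (card_le_of_isPMBasis hτ) hz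
  have h2 : σ = τ := star_eq hnn hσ hpos (card_le_of_isPMBasis hτ) hz
  rw [rho, dif_pos hex, h1, ← h2]

lemma rho_eq_self (hn : 2 ≤ n) {g : PMVec F n → ℝ}
    (hno : ¬ ∃ σ : Finset (PMVec F n), Bad F n σ ∧ ∀ x ∈ σ, 0 < g x) : rho hn g = g := by
  rw [rho, dif_neg hno]

lemma sum_le_one {g : PMVec F n → ℝ} (hg : RealPt (IsPMBasis F n) g)
    (s : Finset (PMVec F n)) : ∑ y ∈ s, g y ≤ 1 := by
  obtain ⟨hnn, τ, hτ, hz, hsum⟩ := hg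
  calc ∑ y ∈ s, g y = ∑ y ∈ s ∩ τ, g y := by
        refine (Finset.sum_subset Finset.inter_subset_left ?_).symm
        intro x hx hxn
        apply hz
        intro hxτ
        exact hxn (Finset.mem_inter.mpr ⟨hx, hxτ⟩)
    _ ≤ ∑ y ∈ τ, g y :=
        Finset.sum_le_sum_of_subset_of_nonneg Finset.inter_subset_right (fun y _ _ => hnn y)
    _ = 1 := hsum

lemma rho_mem (hn : 2 ≤ n) {g : PMVec F n → ℝ} (hg : RealPt (IsPMBasis F n) g) :
    RealPt (IsPMBasisDet1 F n) (rho hn g) := by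
  obtain ⟨hnn, τ, hτ, hz, hsum⟩ := hg
  by_cases hex : ∃ σ : Finset (PMVec F n), Bad F n σ ∧ ∀ x ∈ σ, 0 < g x
  · obtain ⟨σ, hσ, hpos⟩ := hex
    have hfx := rho_eq_of hn ⟨hnn, τ, hτ, hz, hsum⟩ hσ hpos
    have hστ : σ = τ := star_eq hnn hσ hpos (card_le_of_isPMBasis hτ) hz
    subst hστ
    have hne : σ.Nonempty := Finset.card_pos.mp (by rw [bad_card hσ]; omega)
    have hmval : mval σ g = σ.inf' hne g := dif_pos hne
    obtain ⟨y₀, hy₀, hy₀m⟩ := Finset.exists_mem_eq_inf' hne g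
    have hmy : mval σ g = g y₀ := hmval.trans hy₀m
    have hm0 : 0 ≤ mval σ g := by rw [hmy]; exact hnn y₀
    have hmle : ∀ x ∈ σ, mval σ g ≤ g x := by
      intro x hx
      rw [hmval]
      exact Finset.inf'_le g hx
    have hWσ : wfun hn σ ∉ σ := wfun_not_mem hn hσ
    have hgW : g (wfun hn σ) = 0 := hz _ hWσ
    refine ⟨?_, insert (wfun hn σ) (σ.erase y₀), wfun_det1 hn hσ hy₀, ?_, ?_⟩
    · intro x
      rw [hfx]
      dsimp only
      by_cases h1 : x ∈ σ
      · rw [if_pos h1, if_neg (by rintro rfl; exact hWσ h1)]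
        have := hmle x h1
        linarith
      · rw [if_neg h1]
        by_cases h2 : x = wfun hn σ
        · rw [if_pos h2]
          have h3 : (0:ℝ) ≤ (σ.card : ℝ) * mval σ g := mul_nonneg (Nat.cast_nonneg _) hm0
          have := hnn x
          linarith
        · rw [if_neg h2]
          have := hnn x
          linarith
    · intro x hx
      have hxW : x ≠ wfun hn σ := fun h => hx (h ▸ Finset.mem_insert_self _ _)
      rw [hfx]
      dsimp only
      rw [if_neg hxW]
      by_cases h1 : x ∈ σ
      · have hxy : x = y₀ := by
          by_contra hne'
          exact hx (Finset.mem_insert_of_mem (Finset.mem_erase.mpr ⟨hne', h1⟩))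
        rw [if_pos h1, hxy, ← hmy]
        ring
      · rw [if_neg h1, hz x h1]
        ring
    · rw [hfx]
      have hWer : wfun hn σ ∉ σ.erase y₀ := fun h => hWσ (Finset.mem_of_mem_erase h)
      rw [Finset.sum_insert hWer]
      have h1 : g (wfun hn σ) - (if wfun hn σ ∈ σ then mval σ g else 0)
          + (if wfun hn σ = wfun hn σ then (σ.card : ℝ) * mval σ g else 0)
          = (σ.card : ℝ) * mval σ g := by
        rw [if_neg hWσ, if_pos rfl, hgW]
        ring
      have h2 : ∀ x ∈ σ.erase y₀,
          g x - (if x ∈ σ then mval σ g else 0)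
            + (if x = wfun hn σ then (σ.card : ℝ) * mval σ g else 0) = g x - mval σ g := by
        intro x hx
        rw [if_pos (Finset.mem_of_mem_erase hx), if_neg (fun h => hWer (by rw [← h]; exact hx))]
        ring
      rw [h1, Finset.sum_congr rfl h2, Finset.sum_sub_distrib, Finset.sum_const,
        Finset.sum_erase_eq_sub hy₀, hsum, Finset.card_erase_of_mem hy₀, bad_card hσ]
      have hn1 : (1:ℕ) ≤ n := by omega
      rw [nsmul_eq_mul, Nat.cast_sub hn1, hmy]
      push_cast
      ring
  · rw [rho_eq_self hn hex]
    by_cases hd : IsPMBasisDet1 F n τ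
    · exact ⟨hnn, τ, hd, hz, hsum⟩
    · have hbad : Bad F n τ := ⟨hτ, hd⟩
      have h1 : ¬ ∀ x ∈ τ, 0 < g x := fun h => hex ⟨τ, hbad, h⟩
      push_neg at h1
      obtain ⟨y, hy, hy0⟩ := h1
      have hgy : g y = 0 := le_antisymm hy0 (hnn y)
      refine ⟨hnn, τ.erase y, ?_, ?_, ?_⟩
      · apply det1_of_card_lt (isPMBasis_subset (Finset.erase_subset _ _) hτ)
        rw [Finset.card_erase_of_mem hy]
        have h1 := card_le_of_isPMBasis hτ
        have h2 : 0 < τ.card := Finset.card_pos.mpr ⟨y, hy⟩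
        omega
      · intro x hx
        by_cases hxτ : x ∈ τ
        · have hxy : x = y := by
            by_contra hne
            exact hx (Finset.mem_erase.mpr ⟨hne, hxτ⟩)
          rw [hxy]; exact hgy
        · exact hz x hxτ
      · rw [Finset.sum_erase_eq_sub hy, hsum, hgy, sub_zero]

lemma rho_fix (hn : 2 ≤ n) {g : PMVec F n → ℝ} (hg : RealPt (IsPMBasisDet1 F n) g) :
    rho hn g = g := by
  apply rho_eq_self
  rintro ⟨σ, hσ, hpos⟩
  obtain ⟨hnn, τ, hτ, hz, hsum⟩ := hg
  have hτB : IsPMBasis F n τ := by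
    obtain ⟨f, h1, h2, -⟩ := hτ
    exact ⟨f, h1, h2⟩
  have h2 : σ = τ := star_eq hnn hσ hpos (card_le_of_isPMBasis hτB) hz
  exact hσ.2 (h2 ▸ hτ)

lemma continuous_inf' {X : Type*} [TopologicalSpace X] {α : Type*} (σ : Finset α)
    (hne : σ.Nonempty) (f : X → α → ℝ) (hf : ∀ a, Continuous fun x => f x a) :
    Continuous fun x => σ.inf' hne (f x) := by
  classical
  revert hne
  induction σ using Finset.cons_induction with
  | empty => exact fun hne => absurd hne (by simp)
  | cons a s ha ih =>
    intro _
    rcases s.eq_empty_or_nonempty with rfl | hs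
    · simp only [Finset.cons_empty, Finset.inf'_singleton]
      exact hf a
    · have h1 : (fun x => (Finset.cons a s ha).inf' (Finset.cons_nonempty ha) (f x))
          = fun x => min (f x a) (s.inf' hs (f x)) := by
        funext x
        rw [Finset.inf'_cons (H := hs)]
      rw [h1]
      exact (hf a).min (ih hs)

lemma eval_cont (x : PMVec F n) :
    Continuous fun g : {g : PMVec F n → ℝ // RealPt (IsPMBasis F n) g} => g.1 x :=
  (continuous_apply x).comp continuous_subtype_val

lemma star_open (s : Finset (PMVec F n)) :
    IsOpen {g : {g : PMVec F n → ℝ // RealPt (IsPMBasis F n) g} | ∀ z ∈ s, 0 < g.1 z} := by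
  have h1 : {g : {g : PMVec F n → ℝ // RealPt (IsPMBasis F n) g} | ∀ z ∈ s, 0 < g.1 z}
      = ⋂ z ∈ s, {g | 0 < g.1 z} := by ext; simp
  rw [h1]
  exact isOpen_biInter_finset fun z _ => isOpen_lt continuous_const (eval_cont z)

lemma rho_continuous (hn : 2 ≤ n) :
    Continuous fun g : {g : PMVec F n → ℝ // RealPt (IsPMBasis F n) g} => rho hn g.1 := by
  apply continuous_pi
  intro x
  rw [continuous_iff_continuousAt]
  intro g₀
  by_cases hex : ∃ σ : Finset (PMVec F n), Bad F n σ ∧ ∀ z ∈ σ, 0 < g₀.1 z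
  · obtain ⟨σ, hσ, hpos⟩ := hex
    have hne : σ.Nonempty := Finset.card_pos.mp (by rw [bad_card hσ]; omega)
    have hTc : Continuous (fun g : {g : PMVec F n → ℝ // RealPt (IsPMBasis F n) g} =>
        g.1 x - (if x ∈ σ then σ.inf' hne g.1 else 0)
          + (if x = wfun hn σ then (σ.card : ℝ) * σ.inf' hne g.1 else 0)) := by
      have h2 : Continuous fun g : {g : PMVec F n → ℝ // RealPt (IsPMBasis F n) g} =>
          σ.inf' hne g.1 :=
        continuous_inf' σ hne (fun g : {g : PMVec F n → ℝ // RealPt (IsPMBasis F n) g} => g.1) (fun a => eval_cont a)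
      refine ((eval_cont x).sub ?_).add ?_
      · by_cases c1 : x ∈ σ
        · simp only [if_pos c1]; exact h2
        · simp only [if_neg c1]; exact continuous_const
      · by_cases c2 : x = wfun hn σ
        · simp only [if_pos c2]; exact continuous_const.mul h2
        · simp only [if_neg c2]; exact continuous_const
    apply hTc.continuousAt.congr
    refine Filter.eventuallyEq_of_mem ((star_open σ).mem_nhds hpos) ?_
    intro g hg
    show _ = rho hn g.1 x
    rw [rho_eq_of hn g.2 hσ hg]
    simp only [mval, dif_pos hne]
  · have hval : rho hn g₀.1 = g₀.1 := rho_eq_self hn hex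
    obtain ⟨hnn₀, τ₀, hτ₀, hz₀, hsum₀⟩ := g₀.2
    set s : Finset (PMVec F n) := τ₀.filter (fun z => 0 < g₀.1 z) with hs
    have hsum_s : ∑ z ∈ s, g₀.1 z = 1 := by
      rw [hs, Finset.sum_filter_of_ne (fun z hz hne => lt_of_le_of_ne (hnn₀ z) (Ne.symm hne)),
        hsum₀]
    have hpos_s : ∀ z ∈ s, 0 < g₀.1 z := fun z hz => (Finset.mem_filter.mp hz).2
    set φ : {g : PMVec F n → ℝ // RealPt (IsPMBasis F n) g} → ℝ :=
      fun g => ((n:ℝ)+1) * (1 - ∑ z ∈ s, g.1 z) with hφ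
    have hφc : Continuous φ := continuous_const.mul (continuous_const.sub
      (continuous_finset_sum _ fun z _ => eval_cont z))
    have hφ0 : φ g₀ = 0 := by rw [hφ]; dsimp only; rw [hsum_s]; ring
    have hφt : Filter.Tendsto φ (nhds g₀) (nhds 0) := by
      rw [← hφ0]; exact hφc.continuousAt
    have hdiff : Filter.Tendsto
        (fun g : {g : PMVec F n → ℝ // RealPt (IsPMBasis F n) g} => rho hn g.1 x - g.1 x)
        (nhds g₀) (nhds 0) := by
      apply squeeze_zero_norm' ?_ hφt
      filter_upwards [((star_open s).mem_nhds hpos_s)] with g hg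
      by_cases hex' : ∃ σ : Finset (PMVec F n), Bad F n σ ∧ ∀ z ∈ σ, 0 < g.1 z
      · obtain ⟨σ, hσ, hposσ⟩ := hex'
        obtain ⟨hnng, τg, hτg, hzg, hsumg⟩ := g.2
        have hστ : σ = τg := star_eq hnng hσ hposσ (card_le_of_isPMBasis hτg) hzg
        rw [← hστ] at hzg hsumg
        have hne : σ.Nonempty := Finset.card_pos.mp (by rw [bad_card hσ]; omega)
        have hm : mval σ g.1 = σ.inf' hne g.1 := dif_pos hne
        have hssub : s ⊆ σ := by
          intro z hzs
          by_contra hns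
          exact absurd (hzg z hns) (hg z hzs).ne'
        have hsne : s ≠ σ := by
          intro h
          exact hex ⟨σ, hσ, fun z hz => hpos_s z (h ▸ hz)⟩
        obtain ⟨y₁, hy₁σ, hy₁s⟩ : ∃ y₁ ∈ σ, y₁ ∉ s := by
          by_contra h
          push_neg at h
          exact hsne (Finset.Subset.antisymm hssub h)
        have hm_le : mval σ g.1 ≤ 1 - ∑ z ∈ s, g.1 z := by
          rw [hm]
          calc σ.inf' hne g.1 ≤ g.1 y₁ := Finset.inf'_le _ hy₁σ
            _ ≤ ∑ z ∈ σ \ s, g.1 z :=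
                Finset.single_le_sum (fun z _ => hnng z) (Finset.mem_sdiff.mpr ⟨hy₁σ, hy₁s⟩)
            _ = ∑ z ∈ σ, g.1 z - ∑ z ∈ s, g.1 z := Finset.sum_sdiff_eq_sub hssub
            _ = 1 - ∑ z ∈ s, g.1 z := by rw [hsumg]
        have hm0 : 0 ≤ mval σ g.1 := by
          rw [hm]
          obtain ⟨y₂, hy₂, he2⟩ := Finset.exists_mem_eq_inf' hne g.1
          rw [he2]
          exact hnng y₂
        have hSig : 0 ≤ 1 - ∑ z ∈ s, g.1 z := le_trans hm0 hm_le
        have hcardn : (σ.card : ℝ) = (n : ℝ) := by rw [bad_card hσ]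
        have hkey : rho hn g.1 x - g.1 x
            = -(if x ∈ σ then mval σ g.1 else 0)
              + (if x = wfun hn σ then (σ.card:ℝ) * mval σ g.1 else 0) := by
          rw [rho_eq_of hn g.2 hσ hposσ]
          dsimp only
          ring
        rw [hkey, hφ]
        dsimp only
        have hn1 : (1:ℝ) ≤ (n:ℝ) + 1 := by
          have := Nat.cast_nonneg (α := ℝ) n
          linarith
        by_cases c1 : x ∈ σ
        · have c2 : x ≠ wfun hn σ := fun h => wfun_not_mem hn hσ (h ▸ c1)
          rw [if_pos c1, if_neg c2, add_zero, Real.norm_eq_abs, abs_neg, abs_of_nonneg hm0]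
          calc mval σ g.1 ≤ 1 - ∑ z ∈ s, g.1 z := hm_le
            _ ≤ ((n:ℝ)+1) * (1 - ∑ z ∈ s, g.1 z) := le_mul_of_one_le_left hSig hn1
        · rw [if_neg c1, neg_zero, zero_add]
          by_cases c2 : x = wfun hn σ
          · rw [if_pos c2, Real.norm_eq_abs,
              abs_of_nonneg (mul_nonneg (Nat.cast_nonneg _) hm0)]
            calc (σ.card:ℝ) * mval σ g.1 = (n:ℝ) * mval σ g.1 := by rw [hcardn]
              _ ≤ ((n:ℝ)+1) * (1 - ∑ z ∈ s, g.1 z) :=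
                  mul_le_mul (by linarith) hm_le hm0 (by positivity)
          · rw [if_neg c2, norm_zero]
            exact mul_nonneg (by positivity) hSig
      · rw [rho_eq_self hn hex']
        simp only [sub_self, norm_zero, hφ]
        have h1 : ∑ z ∈ s, g.1 z ≤ 1 := sum_le_one g.2 s
        have : (0:ℝ) ≤ 1 - ∑ z ∈ s, g.1 z := by linarith
        exact mul_nonneg (by positivity) this
    have heq : (fun g : {g : PMVec F n → ℝ // RealPt (IsPMBasis F n) g} => rho hn g.1 x)
        = fun g => (rho hn g.1 x - g.1 x) + g.1 x := by
      funext g; ring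
    rw [heq]
    have h1 : Filter.Tendsto (fun g : {g : PMVec F n → ℝ // RealPt (IsPMBasis F n) g} => g.1 x)
        (nhds g₀) (nhds (g₀.1 x)) := (eval_cont x).continuousAt
    have h2 := hdiff.add h1
    unfold ContinuousAt
    have h4 : (fun g : {g : PMVec F n → ℝ // RealPt (IsPMBasis F n) g} =>
        rho hn g.1 x - g.1 x + g.1 x) g₀ = 0 + g₀.1 x := by
      dsimp only
      rw [hval]
      ring
    rw [h4]
    exact h2

end Stmt12Aux
/-- For a field `F` and `n ≥ 2`, the geometric realization of the complex `BD^±_n(F)` of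
determinant-±1 partial ±-bases is a retract of the realization of the complex `B^±_n(F)`
of partial ±-bases: there is a continuous map `ρ : |B^±_n(F)| → |BD^±_n(F)|` restricting
to the identity on `|BD^±_n(F)|`. -/
theorem stmt12 (F : Type*) [Field F] (n : ℕ) (hn : 2 ≤ n) :
    ∃ ρ : C({g : PMVec F n → ℝ // RealPt (IsPMBasis F n) g},
            {g : PMVec F n → ℝ // RealPt (IsPMBasisDet1 F n) g}),
      ∀ x : {g : PMVec F n → ℝ // RealPt (IsPMBasis F n) g},
        RealPt (IsPMBasisDet1 F n) x.1 → ((ρ x : {g : PMVec F n → ℝ //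
          RealPt (IsPMBasisDet1 F n) g}) : PMVec F n → ℝ) = x.1 := by
  refine ⟨ContinuousMap.mk
    (fun g => ⟨Stmt12Aux.rho hn g.1, Stmt12Aux.rho_mem hn g.2⟩)
    ((Stmt12Aux.rho_continuous hn).subtype_mk _), ?_⟩
  intro x hx
  exact Stmt12Aux.rho_fix hn hx
end

section
/- For a prime p ≥ 3 and n ≥ 3, the rank of the free Z-module H̃_{n-2} of the ±-oriented Tits building of F_p^n, defined recursively by t_1 = 1 and t_n = ((p-3)/2 + ((p-1)/2)·p^{n-1})·t_{n-1} + ((p-1)(p-3)/4)·Σ_{k=1}^{n-2} p^k·|Gr_k(F_p^{n-1})|·t_k·t_{n-k-1}, satisfies t_n ≥ p^{n(n-1)/2}, with equality if and only if p = 3. -/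
/-- The number of `k`-dimensional subspaces of `(F_p)^n`. -/
noncomputable def grCard (p n k : ℕ) : ℕ :=
  Nat.card {W : Submodule (ZMod p) (Fin n → ZMod p) // Module.finrank (ZMod p) W = k}

/-- For a prime `p ≥ 3`, the sequence `t_n` (the rank of the reduced homology of the
±-oriented Tits building), defined recursively by `t_1 = 1` and the recursion of
Theorem C, satisfies `t_n ≥ p^{n(n-1)/2}` for `n ≥ 3`, with equality iff `p = 3`. -/
theorem stmt19 (p : ℕ) (hp : p.Prime) (hp3 : 3 ≤ p) (t : ℕ → ℚ)
    (h1 : t 1 = 1)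
    (hrec : ∀ n, 2 ≤ n → t n =
      (((p : ℚ) - 3) / 2 + ((p : ℚ) - 1) / 2 * (p : ℚ) ^ (n - 1)) * t (n - 1)
      + ((p : ℚ) - 1) * ((p : ℚ) - 3) / 4 *
          ∑ k ∈ Finset.Icc 1 (n - 2),
            (p : ℚ) ^ k * (grCard p (n - 1) k : ℚ) * t k * t (n - k - 1)) :
    ∀ n, 3 ≤ n →
      t n ≥ (p : ℚ) ^ (n * (n - 1) / 2) ∧ (t n = (p : ℚ) ^ (n * (n - 1) / 2) ↔ p = 3) := by
  have hpq : (3 : ℚ) ≤ (p : ℚ) := by exact_mod_cast hp3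
  have hp0 : (0 : ℚ) < (p : ℚ) := by linarith
  have key : ∀ n, 1 ≤ n → t n ≥ (p : ℚ) ^ (n * (n - 1) / 2) ∧
      (2 ≤ n → p ≠ 3 → t n > (p : ℚ) ^ (n * (n - 1) / 2)) ∧
      (p = 3 → t n = (p : ℚ) ^ (n * (n - 1) / 2)) := by
    intro n
    induction n using Nat.strong_induction_on with
    | _ n ih =>
      intro hn
      rcases eq_or_lt_of_le hn with h1' | h2'
      · obtain rfl : n = 1 := h1'.symm
        refine ⟨by simp [h1], fun h => by omega, fun _ => by simp [h1]⟩
      · obtain ⟨m, rfl⟩ : ∃ m, n = m + 2 := ⟨n - 2, by omega⟩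
        have hr := hrec (m + 2) (by omega)
        rw [show m + 2 - 1 = m + 1 from rfl, show m + 2 - 2 = m from rfl] at hr
        obtain ⟨hge, _, heq3⟩ := ih (m + 1) (by omega) (by omega)
        have hppow : (0 : ℚ) < (p : ℚ) ^ (m + 1) := pow_pos hp0 _
        have htm_pos : 0 < t (m + 1) :=
          lt_of_lt_of_le (pow_pos hp0 _) hge
        have hS : 0 ≤ ∑ k ∈ Finset.Icc 1 m,
            (p : ℚ) ^ k * (grCard p (m + 1) k : ℚ) * t k * t (m + 2 - k - 1) := by
          apply Finset.sum_nonneg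
          intro k hk
          rw [Finset.mem_Icc] at hk
          have h1k := (ih k (by omega) (by omega)).1
          have h2k := (ih (m + 2 - k - 1) (by omega) (by omega)).1
          have ht1 : (0 : ℚ) ≤ t k := le_trans (le_of_lt (pow_pos hp0 _)) h1k
          have ht2 : (0 : ℚ) ≤ t (m + 2 - k - 1) :=
            le_trans (le_of_lt (pow_pos hp0 _)) h2k
          exact mul_nonneg (mul_nonneg (mul_nonneg (pow_nonneg hp0.le _)
            (Nat.cast_nonneg _)) ht1) ht2
        have hB : 0 ≤ ((p : ℚ) - 1) * ((p : ℚ) - 3) / 4 := by nlinarith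
        have hstep : t (m + 2) ≥
            (((p : ℚ) - 3) / 2 + ((p : ℚ) - 1) / 2 * (p : ℚ) ^ (m + 1)) * t (m + 1) := by
          rw [hr]; nlinarith [mul_nonneg hB hS]
        have hmain : t (m + 2) ≥ (p : ℚ) ^ (m + 1) * t (m + 1) := by
          nlinarith [mul_nonneg (mul_nonneg (show (0:ℚ) ≤ ((p:ℚ) - 3) / 2 by linarith)
            (show (0:ℚ) ≤ 1 + (p:ℚ) ^ (m + 1) by linarith)) htm_pos.le]
        have hexp : (m + 2) * (m + 2 - 1) / 2 = (m + 1) + (m + 1) * (m + 1 - 1) / 2 := by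
          rw [show m + 2 - 1 = m + 1 from rfl, show m + 1 - 1 = m from rfl]
          have h2 : (m + 2) * (m + 1) = 2 * (m + 1) + (m + 1) * m := by ring
          have hd : 2 ∣ (m + 1) * m := by
            rw [Nat.mul_comm]; exact (Nat.even_mul_succ_self m).two_dvd
          omega
        have hpow_eq : (p : ℚ) ^ ((m + 2) * (m + 2 - 1) / 2) =
            (p : ℚ) ^ (m + 1) * (p : ℚ) ^ ((m + 1) * (m + 1 - 1) / 2) := by
          rw [hexp, pow_add]
        refine ⟨?_, ?_, ?_⟩
        · rw [ge_iff_le, hpow_eq]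
          calc (p : ℚ) ^ (m + 1) * (p : ℚ) ^ ((m + 1) * (m + 1 - 1) / 2)
              ≤ (p : ℚ) ^ (m + 1) * t (m + 1) :=
                mul_le_mul_of_nonneg_left hge hppow.le
            _ ≤ t (m + 2) := hmain
        · intro _ hne
          have h4 : (4 : ℚ) ≤ (p : ℚ) := by exact_mod_cast (by omega : 4 ≤ p)
          have hstrict : t (m + 2) > (p : ℚ) ^ (m + 1) * t (m + 1) := by
            nlinarith [mul_pos (mul_pos (show (0:ℚ) < ((p:ℚ) - 3) / 2 by linarith)
              (show (0:ℚ) < 1 + (p:ℚ) ^ (m + 1) by linarith)) htm_pos]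
          rw [gt_iff_lt, hpow_eq]
          calc (p : ℚ) ^ (m + 1) * (p : ℚ) ^ ((m + 1) * (m + 1 - 1) / 2)
              ≤ (p : ℚ) ^ (m + 1) * t (m + 1) :=
                mul_le_mul_of_nonneg_left hge hppow.le
            _ < t (m + 2) := hstrict
        · intro hp3'
          have hpc : (p : ℚ) = 3 := by rw [hp3']; norm_num
          rw [hpow_eq, ← heq3 hp3', hr, hpc]
          ring
  intro n hn
  obtain ⟨hge, hstrict, heq⟩ := key n (by omega)
  refine ⟨hge, ⟨fun he => ?_, fun h => heq h⟩⟩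
  by_contra hne
  exact absurd he (ne_of_gt (hstrict (by omega) hne))
end
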